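/- Pairing of rewrites: for any tree rewriting calculus TL, if T ↪*_{TL} S and T ↪*_{TL} S', then T ↪*_{TL} S + S'. -/

import Mathlib

inductive MTree : Type where
  | node : List ℕ → List (ℕ × MTree) → MTree

namespace MTree

mutual
def numNodes : MTree → ℕ
  | .node _ Γ => 1 + numNodesL Γ
def numNodesL : List (ℕ × MTree) → ℕ
  | [] => 0
  | (_, t) :: Γ => numNodes t + numNodesL Γ
end

mutual
def height : MTree → ℕ
  | .node _ [] => 0
  | .node _ (p :: Γ) => heightL (p :: Γ) + 1
def heightL : List (ℕ × MTree) → ℕ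
  | [] => 0
  | (_, t) :: Γ => max (height t) (heightL Γ)
end

mutual
def width : MTree → ℕ
  | .node _ [] => 1
  | .node _ (p :: Γ) => max (p :: Γ).length (widthL (p :: Γ))
def widthL : List (ℕ × MTree) → ℕ
  | [] => 0
  | (_, t) :: Γ => max (width t) (widthL Γ)
end

def sum : MTree → MTree → MTree
  | .node Δ Γ, .node Δ' Γ' => .node (Δ ++ Δ') (Γ ++ Γ')

inductive IsPos : List ℕ → MTree → Prop where
  | nil : ∀ t, IsPos [] t
  | cons : ∀ {Δ : List ℕ} {Γ : List (ℕ × MTree)} {i : ℕ} {k : List ℕ}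
      (h : i < Γ.length), IsPos k (Γ.get ⟨i, h⟩).2 → IsPos (i :: k) (.node Δ Γ)

def subtree : List ℕ → MTree → MTree
  | [], t => t
  | i :: k, .node Δ Γ =>
    match Γ[i]? with
    | some p => subtree k p.2
    | none => .node Δ Γ

def replace : List ℕ → MTree → MTree → MTree
  | [], _, s => s
  | i :: k, .node Δ Γ, s =>
      .node Δ (Γ.modify i (fun p => (p.1, replace k p.2 s)))

inductive RhoPlus : MTree → MTree → Prop where
  | mk : ∀ (Δ : List ℕ) (Γ : List (ℕ × MTree)) (i : ℕ) (h : i < Δ.length),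
      RhoPlus (.node Δ Γ) (.node (Δ.get ⟨i, h⟩ :: Δ) Γ)

inductive RhoMinus : MTree → MTree → Prop where
  | mk : ∀ (Δ : List ℕ) (Γ : List (ℕ × MTree)) (i : ℕ), i < Δ.length →
      RhoMinus (.node Δ Γ) (.node (Δ.eraseIdx i) Γ)

inductive Sigma' : MTree → MTree → Prop where
  | mk : ∀ (Δ : List ℕ) (Γ : List (ℕ × MTree)) (i j : ℕ)
      (hi : i < Γ.length) (hj : j < Γ.length), i ≠ j →
      Sigma' (.node Δ Γ) (.node Δ ((Γ.set i (Γ.get ⟨j, hj⟩)).set j (Γ.get ⟨i, hi⟩)))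

inductive PiPlus : MTree → MTree → Prop where
  | mk : ∀ (Δ : List ℕ) (Γ : List (ℕ × MTree)) (i : ℕ) (h : i < Γ.length),
      PiPlus (.node Δ Γ) (.node Δ (Γ.get ⟨i, h⟩ :: Γ))

inductive PiMinus : MTree → MTree → Prop where
  | mk : ∀ (Δ : List ℕ) (Γ : List (ℕ × MTree)) (i : ℕ), i < Γ.length →
      PiMinus (.node Δ Γ) (.node Δ (Γ.eraseIdx i))

inductive FourR : MTree → MTree → Prop where
  | mk : ∀ (Δ : List ℕ) (Γ : List (ℕ × MTree)) (i : ℕ) (h : i < Γ.length)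
      (β : ℕ) (s : MTree),
      Γ.get ⟨i, h⟩ = (β, .node [] [(β, s)]) →
      FourR (.node Δ Γ) (.node Δ (Γ.set i (β, s)))

inductive MonoR : MTree → MTree → Prop where
  | mk : ∀ (Δ : List ℕ) (Γ : List (ℕ × MTree)) (i : ℕ) (h : i < Γ.length)
      (α β : ℕ) (s : MTree),
      Γ.get ⟨i, h⟩ = (α, s) → β < α →
      MonoR (.node Δ Γ) (.node Δ (Γ.set i (β, s)))

inductive JayR : MTree → MTree → Prop where
  | mk : ∀ (Δ : List ℕ) (Γ : List (ℕ × MTree)) (i j : ℕ)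
      (hi : i < Γ.length) (hj : j < Γ.length)
      (α β : ℕ) (Δ' : List ℕ) (Γ' : List (ℕ × MTree)) (s : MTree),
      i ≠ j → Γ.get ⟨i, hi⟩ = (α, .node Δ' Γ') → Γ.get ⟨j, hj⟩ = (β, s) → β < α →
      JayR (.node Δ Γ)
        (.node Δ ((Γ.set i (α, .node Δ' (Γ' ++ [(β, s)]))).eraseIdx j))

inductive Ax : Type where
  | four | mono | jay
deriving DecidableEq

def axRule : Ax → MTree → MTree → Prop
  | .four => FourR
  | .mono => MonoR
  | .jay  => JayR

def rootStep (A : Set Ax) (t t' : MTree) : Prop :=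
  RhoPlus t t' ∨ RhoMinus t t' ∨ Sigma' t t' ∨ PiPlus t t' ∨ PiMinus t t' ∨
    ∃ a ∈ A, axRule a t t'

def deepStep (R : MTree → MTree → Prop) (t t' : MTree) : Prop :=
  ∃ k s', IsPos k t ∧ R (subtree k t) s' ∧ t' = replace k t s'

def Rw (A : Set Ax) : MTree → MTree → Prop :=
  Relation.ReflTransGen (deepStep (rootStep A))

end MTree

inductive SPF : Type where
  | top
  | var : ℕ → SPF
  | dia : ℕ → SPF → SPF
  | and : SPF → SPF → SPF

namespace SPF

def md : SPF → ℕ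
  | .top => 0
  | .var _ => 0
  | .dia _ φ => φ.md + 1
  | .and φ ψ => max φ.md ψ.md

def bigAnd : List SPF → SPF
  | [] => .top
  | φ :: l => .and φ (bigAnd l)

def toTree : SPF → MTree
  | .top => .node [] []
  | .var p => .node [p] []
  | .dia α φ => .node [] [(α, toTree φ)]
  | .and φ ψ => (toTree φ).sum (toTree ψ)

end SPF

namespace MTree
mutual
def toForm : MTree → SPF
  | .node Δ Γ => .and (SPF.bigAnd (Δ.map .var)) (toFormL Γ)
def toFormL : List (ℕ × MTree) → SPF
  | [] => .top
  | (α, t) :: Γ => .and (.dia α (toForm t)) (toFormL Γ)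
end
end MTree

inductive Deriv (A : Set MTree.Ax) : SPF → SPF → Prop where
  | refl (φ) : Deriv A φ φ
  | top (φ) : Deriv A φ .top
  | trans {φ ψ χ} : Deriv A φ ψ → Deriv A ψ χ → Deriv A φ χ
  | andE1 (φ ψ) : Deriv A (.and φ ψ) φ
  | andE2 (φ ψ) : Deriv A (.and φ ψ) ψ
  | andI {φ ψ χ} : Deriv A φ ψ → Deriv A φ χ → Deriv A φ (.and ψ χ)
  | dist {φ ψ} (α : ℕ) : Deriv A φ ψ → Deriv A (.dia α φ) (.dia α ψ)
  | four (α : ℕ) (φ) : MTree.Ax.four ∈ A → Deriv A (.dia α (.dia α φ)) (.dia α φ)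
  | mono (α β : ℕ) (φ) : MTree.Ax.mono ∈ A → β < α → Deriv A (.dia α φ) (.dia β φ)
  | jay (α β : ℕ) (φ ψ) : MTree.Ax.jay ∈ A → β < α →
      Deriv A (.and (.dia α φ) (.dia β ψ)) (.dia α (.and φ (.dia β ψ)))

inductive RuleKind : Type where
  | rhoP | rhoM | sigma | piP | piM | four | mono | jay
deriving DecidableEq

def RuleKind.rel : RuleKind → MTree → MTree → Prop
  | .rhoP => MTree.RhoPlus
  | .rhoM => MTree.RhoMinus
  | .sigma => MTree.Sigma'
  | .piP => MTree.PiPlus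
  | .piM => MTree.PiMinus
  | .four => MTree.FourR
  | .mono => MTree.MonoR
  | .jay => MTree.JayR

def listRw : List RuleKind → MTree → MTree → Prop
  | [], t, s => t = s
  | μ :: Ω, t, s => ∃ u, MTree.deepStep μ.rel t u ∧ listRw Ω u s


/-!
Duplicating every atom and every child turns `t` into `t + t` by TK⁺ alone. Rewriting is
compatible with appending `u` on the right: a step inside a child of `t` is a step inside the same
child of `t + u`; the axiom rules only touch `t`'s children and so survive appending `u`; and each
TK⁺ rule only removes or repeats atoms and children, which TK⁺ can redo in `t + u`. Since
`t + u ↪* u + t` by TK⁺, the same holds on the left. Hence `t ↪* t + t ↪* s + t ↪* s + s'`.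
-/
theorem List.modify_append_of_lt {α : Type*} (f : α → α) {l : List α} {i : ℕ}
    (hi : i < l.length) (l' : List α) : (l ++ l').modify i f = l.modify i f ++ l' := by
  induction l generalizing i with
  | nil => simp at hi
  | cons a l ih => cases i <;> simp_all

namespace MTree

variable {A : Set Ax}

@[simp]
theorem node_sum_node (Δ Δ' : List ℕ) (Γ Γ' : List (ℕ × MTree)) :
    (node Δ Γ).sum (node Δ' Γ') = node (Δ ++ Δ') (Γ ++ Γ') :=
  rfl

theorem deepStep_of_rel {R : MTree → MTree → Prop} {t r : MTree} (h : R t r) :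
    deepStep R t r :=
  ⟨[], r, .nil t, h, rfl⟩

theorem Rw.of_rootStep {t r : MTree} (h : rootStep A t r) : Rw A t r :=
  .single (deepStep_of_rel h)

theorem rw_prepend_atoms {L Δ : List ℕ} (hL : L ⊆ Δ) (Γ : List (ℕ × MTree)) :
    Rw A (node Δ Γ) (node (L ++ Δ) Γ) := by
  induction L with
  | nil => exact .refl
  | cons x L ih =>
    obtain ⟨i, hi, rfl⟩ := List.getElem_of_mem (List.mem_append_right L (hL List.mem_cons_self))
    refine (ih (List.subset_of_cons_subset hL)).tail (deepStep_of_rel (Or.inl ?_))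
    exact RhoPlus.mk (L ++ Δ) Γ i hi

theorem rw_prepend_children {L Γ : List (ℕ × MTree)} (hL : L ⊆ Γ) (Δ : List ℕ) :
    Rw A (node Δ Γ) (node Δ (L ++ Γ)) := by
  induction L with
  | nil => exact .refl
  | cons x L ih =>
    obtain ⟨i, hi, rfl⟩ := List.getElem_of_mem (List.mem_append_right L (hL List.mem_cons_self))
    refine (ih (List.subset_of_cons_subset hL)).tail (deepStep_of_rel (Or.inr (Or.inr ?_)))
    exact Or.inr (Or.inl (PiPlus.mk Δ (L ++ Γ) i hi))

theorem rw_drop_atoms (Δ L : List ℕ) (Γ : List (ℕ × MTree)) :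
    Rw A (node (Δ ++ L) Γ) (node Δ Γ) := by
  induction L with
  | nil => rw [List.append_nil]; exact .refl
  | cons x L ih =>
    refine .head (deepStep_of_rel (Or.inr (Or.inl ?_))) ih
    have := RhoMinus.mk (Δ ++ x :: L) Γ Δ.length (by simp)
    rwa [List.eraseIdx_append_of_length_le le_rfl, Nat.sub_self, List.eraseIdx_cons_zero] at this

theorem rw_drop_children (Δ : List ℕ) (Γ L : List (ℕ × MTree)) :
    Rw A (node Δ (Γ ++ L)) (node Δ Γ) := by
  induction L with
  | nil => rw [List.append_nil]; exact .refl
  | cons x L ih =>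
    refine .head (deepStep_of_rel (Or.inr (Or.inr (Or.inr (Or.inr (Or.inl ?_)))))) ih
    have := PiMinus.mk Δ (Γ ++ x :: L) Γ.length (by simp)
    rwa [List.eraseIdx_append_of_length_le le_rfl, Nat.sub_self, List.eraseIdx_cons_zero] at this

def RootSubset : MTree → MTree → Prop
  | node Δ' Γ', node Δ Γ => Δ' ⊆ Δ ∧ Γ' ⊆ Γ

theorem RootSubset.rw {r t : MTree} (h : RootSubset r t) : Rw A t r := by
  obtain ⟨Δ', Γ'⟩ := r
  obtain ⟨Δ, Γ⟩ := t
  exact ((rw_prepend_atoms h.1 Γ).trans (rw_prepend_children h.2 _)).trans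
    ((rw_drop_atoms Δ' Δ _).trans (rw_drop_children Δ' Γ' Γ))

theorem RootSubset.sum_right {r t : MTree} (h : RootSubset r t) (u : MTree) :
    RootSubset (r.sum u) (t.sum u) := by
  obtain ⟨Δ', Γ'⟩ := r
  obtain ⟨Δ, Γ⟩ := t
  obtain ⟨Δu, Γu⟩ := u
  exact ⟨List.append_subset.2 ⟨List.subset_append_of_subset_left _ h.1, List.subset_append_right _ _⟩,
    List.append_subset.2 ⟨List.subset_append_of_subset_left _ h.2, List.subset_append_right _ _⟩⟩

theorem rootSubset_sum_self (t : MTree) : RootSubset (t.sum t) t := by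
  obtain ⟨Δ, Γ⟩ := t
  simp [RootSubset, List.Subset.refl]

theorem rootSubset_sum_comm (t u : MTree) : RootSubset (t.sum u) (u.sum t) := by
  obtain ⟨Δ, Γ⟩ := t
  obtain ⟨Δu, Γu⟩ := u
  exact ⟨List.append_subset.2 ⟨List.subset_append_right _ _, List.subset_append_left _ _⟩,
    List.append_subset.2 ⟨List.subset_append_right _ _, List.subset_append_left _ _⟩⟩

theorem RhoPlus.rootSubset {t r : MTree} (h : RhoPlus t r) : RootSubset r t := by
  obtain ⟨Δ, Γ, i, hi⟩ := h
  exact ⟨List.cons_subset.2 ⟨List.getElem_mem hi, List.Subset.refl _⟩, List.Subset.refl _⟩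

theorem RhoMinus.rootSubset {t r : MTree} (h : RhoMinus t r) : RootSubset r t := by
  obtain ⟨Δ, Γ, i, -⟩ := h
  exact ⟨fun _ => List.mem_of_mem_eraseIdx, List.Subset.refl _⟩

theorem Sigma'.rootSubset {t r : MTree} (h : Sigma' t r) : RootSubset r t := by
  obtain ⟨Δ, Γ, i, j, hi, hj, -⟩ := h
  refine ⟨List.Subset.refl _, fun x hx => ?_⟩
  rcases List.mem_or_eq_of_mem_set hx with hx | rfl
  · rcases List.mem_or_eq_of_mem_set hx with hx | rfl
    · exact hx
    · exact List.getElem_mem hj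
  · exact List.getElem_mem hi

theorem PiPlus.rootSubset {t r : MTree} (h : PiPlus t r) : RootSubset r t := by
  obtain ⟨Δ, Γ, i, hi⟩ := h
  exact ⟨List.Subset.refl _, List.cons_subset.2 ⟨List.getElem_mem hi, List.Subset.refl _⟩⟩

theorem PiMinus.rootSubset {t r : MTree} (h : PiMinus t r) : RootSubset r t := by
  obtain ⟨Δ, Γ, i, -⟩ := h
  exact ⟨List.Subset.refl _, fun _ => List.mem_of_mem_eraseIdx⟩

theorem FourR.sum_right {t r : MTree} (h : FourR t r) (u : MTree) :
    FourR (t.sum u) (r.sum u) := by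
  obtain ⟨Δ, Γ, i, hi, β, s, hget⟩ := h
  obtain ⟨Δu, Γu⟩ := u
  have := FourR.mk (Δ ++ Δu) (Γ ++ Γu) i (by simp; omega) β s
    (by simpa [List.getElem_append_left hi] using hget)
  simpa [List.set_append_left _ _ hi] using this

theorem MonoR.sum_right {t r : MTree} (h : MonoR t r) (u : MTree) :
    MonoR (t.sum u) (r.sum u) := by
  obtain ⟨Δ, Γ, i, hi, α, β, s, hget, hβα⟩ := h
  obtain ⟨Δu, Γu⟩ := u
  have := MonoR.mk (Δ ++ Δu) (Γ ++ Γu) i (by simp; omega) α β s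
    (by simpa [List.getElem_append_left hi] using hget) hβα
  simpa [List.set_append_left _ _ hi] using this

theorem JayR.sum_right {t r : MTree} (h : JayR t r) (u : MTree) :
    JayR (t.sum u) (r.sum u) := by
  obtain ⟨Δ, Γ, i, j, hi, hj, α, β, Δ', Γ', s, hij, hgi, hgj, hβα⟩ := h
  obtain ⟨Δu, Γu⟩ := u
  have := JayR.mk (Δ ++ Δu) (Γ ++ Γu) i j (by simp; omega) (by simp; omega) α β Δ' Γ' s hij
    (by simpa [List.getElem_append_left hi] using hgi)
    (by simpa [List.getElem_append_left hj] using hgj) hβα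
  rw [List.set_append_left _ _ hi, List.eraseIdx_append_of_lt_length (by simpa using hj)] at this
  simpa using this

theorem axRule_sum_right {a : Ax} {t r : MTree} (h : axRule a t r) (u : MTree) :
    axRule a (t.sum u) (r.sum u) := by
  cases a
  exacts [FourR.sum_right h u, MonoR.sum_right h u, JayR.sum_right h u]

section Sum

variable {i : ℕ} {k : List ℕ} {t u : MTree}

theorem IsPos.sum_right (h : IsPos (i :: k) t) (u : MTree) : IsPos (i :: k) (t.sum u) := by
  obtain ⟨Δ, Γ⟩ := t
  obtain ⟨Δu, Γu⟩ := u
  obtain _ | ⟨hi, hk⟩ := h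
  exact .cons (by simp; omega) (by simpa [List.getElem_append_left hi] using hk)

theorem IsPos.subtree_sum_right (h : IsPos (i :: k) t) (u : MTree) :
    subtree (i :: k) (t.sum u) = subtree (i :: k) t := by
  obtain ⟨Δ, Γ⟩ := t
  obtain ⟨Δu, Γu⟩ := u
  obtain _ | ⟨hi, -⟩ := h
  simp [subtree, List.getElem?_append_left hi, List.getElem?_eq_getElem hi]

theorem IsPos.replace_sum_right (h : IsPos (i :: k) t) (u s : MTree) :
    replace (i :: k) (t.sum u) s = (replace (i :: k) t s).sum u := by
  obtain ⟨Δ, Γ⟩ := t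
  obtain ⟨Δu, Γu⟩ := u
  obtain _ | ⟨hi, -⟩ := h
  simp [replace, List.modify_append_of_lt _ hi]

end Sum

variable {t r : MTree}

theorem rw_sum_right_of_rootStep (h : rootStep A t r) (u : MTree) :
    Rw A (t.sum u) (r.sum u) := by
  obtain h | h | h | h | h | ⟨a, ha, h⟩ := h
  iterate 5 exact (h.rootSubset.sum_right u).rw
  exact .of_rootStep (Or.inr (Or.inr (Or.inr (Or.inr (Or.inr ⟨a, ha, axRule_sum_right h u⟩)))))

theorem rw_sum_right_of_deepStep (h : deepStep (rootStep A) t r) (u : MTree) :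
    Rw A (t.sum u) (r.sum u) := by
  obtain ⟨_ | ⟨i, k⟩, s, hpos, hstep, rfl⟩ := h
  · exact rw_sum_right_of_rootStep hstep u
  · refine .single ⟨i :: k, s, hpos.sum_right u, ?_, (hpos.replace_sum_right u s).symm⟩
    rwa [hpos.subtree_sum_right u]

theorem Rw.sum_right {s : MTree} (h : Rw A t s) (u : MTree) : Rw A (t.sum u) (s.sum u) :=
  Relation.ReflTransGen.lift' (fun x : MTree => x.sum u)
    (fun _ _ hstep => rw_sum_right_of_deepStep hstep u) _ _ h

theorem Rw.sum_left {s : MTree} (h : Rw A t s) (u : MTree) : Rw A (u.sum t) (u.sum s) :=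
  (rootSubset_sum_comm t u).rw.trans ((h.sum_right u).trans (rootSubset_sum_comm u s).rw)

end MTree

theorem stmt14 (A : Set MTree.Ax) (t s s' : MTree)
    (h1 : MTree.Rw A t s) (h2 : MTree.Rw A t s') :
    MTree.Rw A t (s.sum s') :=
  (MTree.rootSubset_sum_self t).rw.trans ((h1.sum_right t).trans (h2.sum_left s))
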